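/- Let R_1, …, R_n, R_{n+1} be exchangeable real-valued random variables (the non-conformity scores), and let k be the ⌈(1−α)(n+1)⌉-th smallest value among R_1, …, R_n (with k = +∞ if ⌈(1−α)(n+1)⌉ > n). Then ℙ(R_{n+1} ≤ k) ≥ 1 − α. -/

import Mathlib

/-!
Call the number of scores strictly below `R i` the strict rank of `i`. Whatever the values, the
`m` smallest scores have strict rank `< m`, so at least `m` of the `n + 1` indices do. By
exchangeability each index has the same probability `p` of strict rank `< m`, hence
`(n + 1) p ≥ m ≥ (1 - α)(n + 1)`. Finally `R (n + 1)` lies below the `m`-th smallest calibration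
score exactly when fewer than `m` calibration scores lie strictly below it, i.e. when its strict
rank is `< m`.
-/

open MeasureTheory

/-- The `m`-th smallest value among `v 0, …, v (n-1)` (for `1 ≤ m ≤ n`),
defined as the least `x` such that at least `m` of the values are `≤ x`. -/
noncomputable def orderStat (n : ℕ) (v : Fin n → ℝ) (m : ℕ) : ℝ :=
  sInf {x : ℝ | m ≤ (Finset.univ.filter (fun i => v i ≤ x)).card}

open Finset
open scoped ENNReal

theorem le_orderStat_iff {n m : ℕ} (v : Fin n → ℝ) (hm : 1 ≤ m) (hmn : m ≤ n) (t : ℝ) :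
    t ≤ orderStat n v m ↔ #{i | v i < t} < m := by
  obtain ⟨b, hb⟩ := (Set.finite_range v).bddBelow
  obtain ⟨c, hc⟩ := (Set.finite_range v).bddAbove
  have hne : {x : ℝ | m ≤ #{i | v i ≤ x}}.Nonempty :=
    ⟨c, by simpa [filter_true_of_mem fun i _ => hc (Set.mem_range_self i)] using hmn⟩
  have hbdd : BddBelow {x : ℝ | m ≤ #{i | v i ≤ x}} := by
    refine ⟨b, fun x hx => ?_⟩
    obtain ⟨i, hi⟩ := card_pos.mp (hm.trans hx)
    exact (hb (Set.mem_range_self i)).trans (mem_filter.mp hi).2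
  rw [orderStat, le_csInf_iff hbdd hne, ← not_le]
  constructor
  · intro h hmt
    have hF : (univ.filter fun i => v i < t).Nonempty := card_pos.mp (hm.trans hmt)
    refine (h _ (hmt.trans (card_le_card fun i hi => ?_))).not_gt
      ((sup'_lt_iff hF).mpr fun i hi => (mem_filter.mp hi).2)
    exact mem_filter.mpr ⟨mem_univ i, le_sup' v hi⟩
  · intro h x hx
    by_contra! hxt
    exact h (hx.trans (card_le_card fun i hi =>
      mem_filter.mpr ⟨mem_univ i, (mem_filter.mp hi).2.trans_lt hxt⟩))

section StrictRank

variable {ι β : Type*} [Fintype ι] [LinearOrder β]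

def strictRank (w : ι → β) (i : ι) : ℕ := #{j | w j < w i}

theorem strictRank_comp_perm (w : ι → β) (σ : Equiv.Perm ι) (i : ι) :
    strictRank (w ∘ σ) i = strictRank w (σ i) :=
  card_equiv σ (by simp)

theorem strictRank_last {n : ℕ} (w : Fin (n + 1) → β) :
    strictRank w (Fin.last n) = #{i : Fin n | w i.castSucc < w (Fin.last n)} := by
  simp only [strictRank, card_filter, Fin.sum_univ_castSucc, lt_irrefl, if_false, add_zero]

theorem le_card_strictRank_lt (w : ι → β) {m : ℕ} (hm : m ≤ Fintype.card ι) :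
    m ≤ #{i | strictRank w i < m} := by
  by_cases h : ∀ i, strictRank w i < m
  · simpa [filter_true_of_mem fun i _ => h i] using hm
  push Not at h
  -- Everything strictly below the smallest value of strict rank `≥ m` has strict rank `< m`.
  obtain ⟨i₀, hi₀, hmin⟩ := exists_min_image {i | m ≤ strictRank w i} w
    (by simpa [Finset.Nonempty] using h)
  calc m ≤ strictRank w i₀ := (mem_filter.mp hi₀).2
    _ ≤ #{i | strictRank w i < m} := card_le_card fun j hj => by
      simp only [mem_filter, mem_univ, true_and] at hj ⊢
      by_contra hjm
      exact (hmin j (by simpa using hjm)).not_gt hj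

end StrictRank

theorem sum_measure_eq_lintegral_card {ι α : Type*} [Fintype ι] [MeasurableSpace α]
    (μ : Measure α) {p : α → ι → Prop} [∀ x, DecidablePred (p x)]
    (hp : ∀ i, MeasurableSet {x | p x i}) :
    ∑ i, μ {x | p x i} = ∫⁻ x, (#{i | p x i} : ℝ≥0∞) ∂μ := by
  have hcard (x : α) : (#{i | p x i} : ℝ≥0∞) = ∑ i, {x | p x i}.indicator 1 x := by
    simp [Set.indicator_apply]
  simp_rw [hcard]
  rw [lintegral_finsetSum _ fun i _ => measurable_one.indicator (hp i)]
  simp_rw [lintegral_indicator_one (hp _)]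

section ExchangeableScores

variable {ι : Type*} [Fintype ι] {μ : Measure (ι → ℝ)}

theorem measurableSet_strictRank_lt (i : ι) (m : ℕ) :
    MeasurableSet {w : ι → ℝ | strictRank w i < m} := by
  have hrank : Measurable fun w : ι → ℝ => strictRank w i := by
    simp_rw [strictRank, card_filter]
    exact Finset.measurable_sum _ fun j _ => Measurable.ite
      (measurableSet_lt (measurable_pi_apply j) (measurable_pi_apply i))
      measurable_const measurable_const
  exact measurableSet_lt hrank measurable_const

theorem measure_strictRank_lt_eq (hμ : ∀ σ : Equiv.Perm ι, μ.map (· ∘ σ) = μ) (i j : ι) (m : ℕ) :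
    μ {w | strictRank w i < m} = μ {w | strictRank w j < m} := by
  classical
  calc μ {w | strictRank w i < m}
      = μ ((· ∘ Equiv.swap i j) ⁻¹' {w | strictRank w j < m}) := by
        congr 1; ext w; simp [strictRank_comp_perm]
    _ = μ {w | strictRank w j < m} := by
        rw [← Measure.map_apply (by fun_prop) (measurableSet_strictRank_lt j m), hμ]

theorem natCast_le_card_mul_measure_strictRank_lt [IsProbabilityMeasure μ]
    (hμ : ∀ σ : Equiv.Perm ι, μ.map (· ∘ σ) = μ) (i : ι) {m : ℕ} (hm : m ≤ Fintype.card ι) :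
    (m : ℝ≥0∞) ≤ Fintype.card ι * μ {w | strictRank w i < m} := by
  calc (m : ℝ≥0∞) = ∫⁻ _, (m : ℝ≥0∞) ∂μ := by simp
    _ ≤ ∫⁻ w, (#{j | strictRank w j < m} : ℝ≥0∞) ∂μ := by
      gcongr with w
      exact le_card_strictRank_lt w hm
    _ = ∑ j, μ {w | strictRank w j < m} :=
      (sum_measure_eq_lintegral_card μ fun j => measurableSet_strictRank_lt j m).symm
    _ = Fintype.card ι * μ {w | strictRank w i < m} := by
      simp [measure_strictRank_lt_eq hμ _ i]

end ExchangeableScores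

theorem ENNReal.ofReal_le_of_natCeil_le_mul {N : ℕ} (hN : N ≠ 0) {x : ℝ} {p : ℝ≥0∞}
    (h : (⌈x * N⌉₊ : ℝ≥0∞) ≤ N * p) : ENNReal.ofReal x ≤ p := by
  rw [← ENNReal.mul_le_mul_iff_right (a := N) (by simpa) (by simp)]
  calc (N : ℝ≥0∞) * ENNReal.ofReal x = ENNReal.ofReal (x * N) := by
        rw [mul_comm x, ENNReal.ofReal_mul N.cast_nonneg, ENNReal.ofReal_natCast]
    _ ≤ ⌈x * N⌉₊ := by
        rw [← ENNReal.ofReal_natCast]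
        exact ENNReal.ofReal_le_ofReal (Nat.le_ceil _)
    _ ≤ N * p := h

theorem stmt_12 {Ω : Type*} [MeasurableSpace Ω] (P : Measure Ω) [IsProbabilityMeasure P]
    (n : ℕ) (α : ℝ) (hα : α ∈ Set.Ioo (0:ℝ) 1)
    (R : Fin (n + 1) → Ω → ℝ) (hmeas : ∀ i, Measurable (R i))
    (hexch : ∀ σ : Equiv.Perm (Fin (n + 1)),
      Measure.map (fun ω (i : Fin (n + 1)) => R (σ i) ω) P
        = Measure.map (fun ω (i : Fin (n + 1)) => R i ω) P)
    (m : ℕ) (hm : m = ⌈(1 - α) * ((n : ℝ) + 1)⌉₊) :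
    ENNReal.ofReal (1 - α) ≤
      P {ω | if m ≤ n then
              R (Fin.last n) ω ≤ orderStat n (fun i => R i.castSucc ω) m
            else True} := by
  obtain ⟨hα0, hα1⟩ := hα
  split_ifs with hmn
  case neg =>
    simp only [Set.ofPred_true, measure_univ, ENNReal.ofReal_le_one]
    linarith
  have hm1 : 1 ≤ m := hm ▸ Nat.ceil_pos.mpr (mul_pos (sub_pos.mpr hα1) n.cast_add_one_pos)
  set V : Ω → Fin (n + 1) → ℝ := fun ω i => R i ω
  have hV : Measurable V := measurable_pi_lambda _ hmeas
  have := Measure.isProbabilityMeasure_map (μ := P) hV.aemeasurable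
  have hinv (σ : Equiv.Perm (Fin (n + 1))) : (P.map V).map (· ∘ σ) = P.map V := by
    rw [Measure.map_map (by fun_prop) hV]
    exact hexch σ
  have hevent : {ω | R (Fin.last n) ω ≤ orderStat n (fun i => R i.castSucc ω) m}
      = V ⁻¹' {w | strictRank w (Fin.last n) < m} := by
    ext ω
    simp [le_orderStat_iff _ hm1 hmn, strictRank_last, V]
  have hcount := natCast_le_card_mul_measure_strictRank_lt hinv (Fin.last n)
    (m := m) (by simpa using hmn.trans n.le_succ)
  rw [hevent, ← Measure.map_apply hV (measurableSet_strictRank_lt _ _)]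
  refine ENNReal.ofReal_le_of_natCeil_le_mul n.succ_ne_zero ?_
  simpa [hm] using hcount
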